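/- If d_TV(P,P') ≤ η₁ and d_TV(Q,Q') ≤ η₂, then for every α∈[0,1] with α+η₁ ≤ 1, T(P,Q)(α) ≥ T(P',Q')(α+η₁) − η₂. -/

import Mathlib

/-!
For a test `φ` with values in `[0,1]`, a Hahn decomposition `s` of `μ - ν` gives
`∫ φ dν - ∫ φ dμ ≤ ν s - μ s ≤ d_TV(μ,ν)`. Hence a level-`α` test for `(P, Q)` is a
level-`(α + η₁)` test for `(P', Q')`, and its type II error under `Q'` exceeds the one under `Q`
by at most `η₂`.
-/

open MeasureTheory Set

/-- The trade-off function. -/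
noncomputable def tradeoff {X : Type*} [MeasurableSpace X] (P Q : Measure X) (α : ℝ) : ℝ :=
  sInf {b : ℝ | ∃ φ : X → ℝ, Measurable φ ∧ (∀ x, φ x ∈ Icc (0:ℝ) 1) ∧
    (∫ x, φ x ∂P) ≤ α ∧ b = ∫ x, (1 - φ x) ∂Q}

/-- Total variation distance `sup_A |P(A) - Q(A)|`. -/
noncomputable def dTV {X : Type*} [MeasurableSpace X] (P Q : Measure X) : ℝ :=
  sSup {r : ℝ | ∃ A : Set X, MeasurableSet A ∧ r = |(P A).toReal - (Q A).toReal|}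

section

variable {X : Type*} [MeasurableSpace X]

lemma integrable_of_forall_mem_Icc {μ : Measure X} [IsFiniteMeasure μ] {φ : X → ℝ}
    (hφ : Measurable φ) (h01 : ∀ x, φ x ∈ Icc (0 : ℝ) 1) : Integrable φ μ :=
  .of_bound hφ.aestronglyMeasurable 1 <| ae_of_all _ fun x => by
    rw [Real.norm_of_nonneg (h01 x).1]; exact (h01 x).2

lemma dTV_bddAbove (μ ν : Measure X) [IsFiniteMeasure μ] [IsFiniteMeasure ν] :
    BddAbove {r : ℝ | ∃ A : Set X, MeasurableSet A ∧ r = |(μ A).toReal - (ν A).toReal|} := by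
  refine ⟨(μ univ).toReal + (ν univ).toReal, ?_⟩
  rintro r ⟨A, -, rfl⟩
  have hμ : (μ A).toReal ≤ (μ univ).toReal := measureReal_mono (subset_univ A)
  have hν : (ν A).toReal ≤ (ν univ).toReal := measureReal_mono (subset_univ A)
  rw [abs_sub_le_iff]
  constructor <;> linarith [(μ A).toReal_nonneg, (ν A).toReal_nonneg]

lemma abs_sub_le_dTV (μ ν : Measure X) [IsFiniteMeasure μ] [IsFiniteMeasure ν] {A : Set X}
    (hA : MeasurableSet A) : |(μ A).toReal - (ν A).toReal| ≤ dTV μ ν :=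
  le_csSup (dTV_bddAbove μ ν) ⟨A, hA, rfl⟩

lemma integral_sub_integral_le_of_le {μ ν : Measure X} [IsFiniteMeasure μ] [IsFiniteMeasure ν]
    (hμν : μ ≤ ν) {φ : X → ℝ} (hφ : Measurable φ) (h01 : ∀ x, φ x ∈ Icc (0 : ℝ) 1) :
    ∫ x, φ x ∂ν - ∫ x, φ x ∂μ ≤ (ν univ).toReal - (μ univ).toReal := by
  have h01' : ∀ x, 1 - φ x ∈ Icc (0 : ℝ) 1 := fun x => Icc.mem_iff_one_sub_mem.1 (h01 x)
  have hle : ∫ x, 1 - φ x ∂μ ≤ ∫ x, 1 - φ x ∂ν :=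
    integral_mono_measure hμν (ae_of_all _ fun x => (h01' x).1)
      (integrable_of_forall_mem_Icc (hφ.const_sub 1) h01')
  rw [integral_sub (integrable_const 1) (integrable_of_forall_mem_Icc hφ h01),
    integral_sub (integrable_const 1) (integrable_of_forall_mem_Icc hφ h01)] at hle
  simp only [integral_const, smul_eq_mul, mul_one, measureReal_def] at hle
  linarith

lemma integral_le_integral_add_dTV (μ ν : Measure X) [IsFiniteMeasure μ] [IsFiniteMeasure ν]
    {φ : X → ℝ} (hφ : Measurable φ) (h01 : ∀ x, φ x ∈ Icc (0 : ℝ) 1) :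
    ∫ x, φ x ∂ν ≤ ∫ x, φ x ∂μ + dTV μ ν := by
  obtain ⟨s, hs⟩ := exists_isHahnDecomposition μ ν
  have on_s := integral_sub_integral_le_of_le hs.le_on hφ h01
  rw [Measure.restrict_apply_univ, Measure.restrict_apply_univ] at on_s
  have on_compl : ∫ x in sᶜ, φ x ∂ν ≤ ∫ x in sᶜ, φ x ∂μ :=
    integral_mono_measure hs.ge_on_compl (ae_of_all _ fun x => (h01 x).1)
      (integrable_of_forall_mem_Icc hφ h01)
  have h_dTV := abs_sub_le_dTV μ ν hs.measurableSet
  rw [abs_sub_comm] at h_dTV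
  have split_μ :=
    integral_add_compl hs.measurableSet (integrable_of_forall_mem_Icc (μ := μ) hφ h01)
  have split_ν :=
    integral_add_compl hs.measurableSet (integrable_of_forall_mem_Icc (μ := ν) hφ h01)
  linarith [le_abs_self ((ν s).toReal - (μ s).toReal)]

lemma tradeoff_le_integral (P Q : Measure X) {α : ℝ} {φ : X → ℝ} (hφ : Measurable φ)
    (h01 : ∀ x, φ x ∈ Icc (0 : ℝ) 1) (hP : ∫ x, φ x ∂P ≤ α) :
    tradeoff P Q α ≤ ∫ x, 1 - φ x ∂Q := by
  refine csInf_le ⟨0, ?_⟩ ⟨φ, hφ, h01, hP, rfl⟩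
  rintro b ⟨ψ, -, hψ01, -, rfl⟩
  exact integral_nonneg fun x => sub_nonneg.2 (hψ01 x).2

lemma le_tradeoff (P Q : Measure X) {α c : ℝ} (hα : 0 ≤ α)
    (h : ∀ φ : X → ℝ, Measurable φ → (∀ x, φ x ∈ Icc (0 : ℝ) 1) → ∫ x, φ x ∂P ≤ α →
      c ≤ ∫ x, 1 - φ x ∂Q) :
    c ≤ tradeoff P Q α := by
  refine le_csInf ⟨_, 0, measurable_const, fun _ => ⟨le_rfl, zero_le_one⟩, by simpa, rfl⟩ ?_
  rintro b ⟨φ, hφ, h01, hP, rfl⟩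
  exact h φ hφ h01 hP

end

theorem stmt3_general {X : Type*} [MeasurableSpace X] (P P' Q Q' : Measure X)
    [IsProbabilityMeasure P] [IsProbabilityMeasure P']
    [IsProbabilityMeasure Q] [IsProbabilityMeasure Q']
    (η₁ η₂ : ℝ) (h₁ : dTV P P' ≤ η₁) (h₂ : dTV Q Q' ≤ η₂)
    (α : ℝ) (hα : α ∈ Icc (0:ℝ) 1) :
    tradeoff P' Q' (α + η₁) - η₂ ≤ tradeoff P Q α := by
  refine le_tradeoff P Q hα.1 fun φ hφ h01 hP => ?_
  have hP' : ∫ x, φ x ∂P' ≤ α + η₁ := by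
    linarith [integral_le_integral_add_dTV P P' hφ h01]
  have hQ' := integral_le_integral_add_dTV Q Q' (hφ.const_sub 1)
    fun x => Icc.mem_iff_one_sub_mem.1 (h01 x)
  linarith [tradeoff_le_integral P' Q' hφ h01 hP']

/-- if `d_TV(P,P') ≤ η₁` and `d_TV(Q,Q') ≤ η₂` then
`T(P,Q)(α) ≥ T(P',Q')(α+η₁) − η₂` whenever `α ∈ [0,1]` and `α + η₁ ≤ 1`. -/
theorem stmt3 {X : Type*} [MeasurableSpace X] (P P' Q Q' : Measure X)
    [IsProbabilityMeasure P] [IsProbabilityMeasure P']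
    [IsProbabilityMeasure Q] [IsProbabilityMeasure Q']
    (η₁ η₂ : ℝ) (h₁ : dTV P P' ≤ η₁) (h₂ : dTV Q Q' ≤ η₂)
    (α : ℝ) (hα : α ∈ Icc (0:ℝ) 1) (hα₁ : α + η₁ ≤ 1) :
    tradeoff P' Q' (α + η₁) - η₂ ≤ tradeoff P Q α :=
  stmt3_general P P' Q Q' η₁ η₂ h₁ h₂ α hα
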